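/- arXiv:1312.5620 — 2 statements merged into one kernel-verified Lean document; each statement's English description precedes it below -/
import Mathlib

section
/- Let G be a graph obtained from a 4-cycle C by attaching pendant edges (possibly none) at its vertices. Then the strong chromatic index of G equals the maximum of d(u) + d(v) over all edges uv of the cycle C. -/
open SimpleGraph

/-- Two edges of `G` are within distance at most 2: they share a vertex, or some edge of `G`
joins an endpoint of one to an endpoint of the other. -/
def EdgesNear {V : Type*} (G : SimpleGraph V) (e f : Sym2 V) : Prop :=
  (∃ x, x ∈ e ∧ x ∈ f) ∨ (∃ x y, x ∈ e ∧ y ∈ f ∧ G.Adj x y)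

/-- `c` assigns distinct colours to any two distinct edges of `G` at distance at most 2. -/
def IsStrongEdgeColoringOn {V : Type*} (G : SimpleGraph V) (c : Sym2 V → ℕ) : Prop :=
  ∀ e ∈ G.edgeSet, ∀ f ∈ G.edgeSet, e ≠ f → EdgesNear G e f → c e ≠ c f

/-- A strong edge-colouring of `G` with `k` colours. -/
def IsStrongEdgeColoring {V : Type*} (G : SimpleGraph V) (k : ℕ) (c : Sym2 V → ℕ) : Prop :=
  (∀ e ∈ G.edgeSet, c e < k) ∧ IsStrongEdgeColoringOn G c

/-- The strong chromatic index of `G`. -/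
noncomputable def sci {V : Type*} (G : SimpleGraph V) : ℕ :=
  sInf {k | ∃ c : Sym2 V → ℕ, IsStrongEdgeColoring G k c}

/-- Degree of a vertex (cardinality of its neighbour set). -/
noncomputable def sdeg {V : Type*} (G : SimpleGraph V) (v : V) : ℕ :=
  (G.neighborSet v).ncard

/-- The graph obtained from the cycle `C_n` (on vertices `Sum.inl i`, `i : Fin n`)
by attaching `p i` pendant edges at the cycle vertex `i` (the pendant neighbours of `i`
are the vertices `Sum.inr ⟨i, x⟩`). -/
def pufferGraph (n : ℕ) (p : Fin n → ℕ) :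
    SimpleGraph (Fin n ⊕ Σ i : Fin n, Fin (p i)) :=
  SimpleGraph.fromRel (fun a b =>
    (∃ i j : Fin n, a = Sum.inl i ∧ b = Sum.inl j ∧ (SimpleGraph.cycleGraph n).Adj i j) ∨
    (∃ (i : Fin n) (x : Fin (p i)), a = Sum.inl i ∧ b = Sum.inr ⟨i, x⟩))

open Classical in
/-- The maximum of `d(u) + d(v)` over the edges `uv` of the cycle of `pufferGraph n p`. -/
noncomputable def maxCycleDegSum (n : ℕ) (p : Fin n → ℕ) : ℕ :=
  Finset.univ.sup fun q : Fin n × Fin n =>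
    if (SimpleGraph.cycleGraph n).Adj q.1 q.2 then
      sdeg (pufferGraph n p) (Sum.inl q.1) + sdeg (pufferGraph n p) (Sum.inl q.2)
    else 0

/-! In `C₄` any two cycle edges are near, and every vertex is equal or adjacent to an endpoint of
every cycle edge. Hence for a cycle edge `uv` the four cycle edges together with the pendant edges
at `u` and at `v` are pairwise near: these are `d(u) + d(v)` edges needing distinct colours.

Conversely, colour the cycle edge `{i, i + 1}` with `i`, the pendant edges at the even vertices
`0, 2` from a palette of `max (p 0) (p 2)` colours, and those at the odd vertices `1, 3` from a
disjoint palette of `max (p 1) (p 3)` colours. Pendant edges at opposite vertices are not near, so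
they may share colours, and as every cycle edge joins an even and an odd vertex the total
`4 + max (p 0) (p 2) + max (p 1) (p 3)` is the largest `d(u) + d(v)`. -/

section StrongEdgeColoring

variable {V : Type*} {G : SimpleGraph V}

lemma EdgesNear.of_mem {e f : Sym2 V} {x y : V} (hx : x ∈ e) (hy : y ∈ f)
    (h : x = y ∨ G.Adj x y) : EdgesNear G e f := by
  rcases h with rfl | hxy
  · exact Or.inl ⟨x, hx, hy⟩
  · exact Or.inr ⟨x, y, hx, hy, hxy⟩

lemma EdgesNear.symm {e f : Sym2 V} (h : EdgesNear G e f) : EdgesNear G f e := by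
  rcases h with ⟨x, hx, hy⟩ | ⟨x, y, hx, hy, hxy⟩
  · exact Or.inl ⟨x, hy, hx⟩
  · exact Or.inr ⟨y, x, hy, hx, hxy.symm⟩

lemma IsStrongEdgeColoring.mono {k l : ℕ} {c : Sym2 V → ℕ} (hc : IsStrongEdgeColoring G k c)
    (hkl : k ≤ l) : IsStrongEdgeColoring G l c :=
  ⟨fun e he => (hc.1 e he).trans_le hkl, hc.2⟩

lemma IsStrongEdgeColoring.card_le_of_pairwise_edgesNear {ι : Type*} [Fintype ι] {k : ℕ}
    {c : Sym2 V → ℕ} (hc : IsStrongEdgeColoring G k c) {F : ι → Sym2 V}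
    (hF : Function.Injective F) (hmem : ∀ i, F i ∈ G.edgeSet)
    (hnear : Pairwise fun i j => EdgesNear G (F i) (F j)) : Fintype.card ι ≤ k := by
  have hinj : Function.Injective fun i => (⟨c (F i), hc.1 _ (hmem i)⟩ : Fin k) := by
    intro i j hij
    by_contra hne
    exact hc.2 _ (hmem i) _ (hmem j) (hF.ne hne) (hnear hne) (Fin.val_eq_of_eq hij)
  simpa using Fintype.card_le_of_injective _ hinj

lemma sci_eq_of_isStrongEdgeColoring {k : ℕ} {c : Sym2 V → ℕ}
    (hc : IsStrongEdgeColoring G k c)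
    (hmin : ∀ (l : ℕ) (c' : Sym2 V → ℕ), IsStrongEdgeColoring G l c' → k ≤ l) :
    sci G = k :=
  le_antisymm (Nat.sInf_le ⟨c, hc⟩) (le_csInf ⟨k, c, hc⟩ fun l ⟨c', hc'⟩ => hmin l c' hc')

end StrongEdgeColoring

lemma SimpleGraph.cycleGraph_adj_iff_eq_add_one {n : ℕ} {i j : Fin (n + 2)} :
    (cycleGraph (n + 2)).Adj i j ↔ j = i + 1 ∨ i = j + 1 := by
  rw [cycleGraph_adj, sub_eq_iff_eq_add', sub_eq_iff_eq_add', or_comm]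

namespace pufferGraph

variable {n : ℕ} {p : Fin n → ℕ}

@[simp]
lemma adj_inl_inl {i j : Fin n} :
    (pufferGraph n p).Adj (Sum.inl i) (Sum.inl j) ↔ (cycleGraph n).Adj i j := by
  simp only [pufferGraph, fromRel_adj, ne_eq, Sum.inl.injEq]
  constructor
  · rintro ⟨-, (⟨a, b, rfl, rfl, hab⟩ | ⟨a, x, -, h⟩) | (⟨a, b, rfl, rfl, hab⟩ | ⟨a, x, -, h⟩)⟩
    all_goals first | exact hab | exact hab.symm | cases h
  · exact fun h => ⟨h.ne, Or.inl (Or.inl ⟨i, j, rfl, rfl, h⟩)⟩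

@[simp]
lemma adj_inl_inr {i : Fin n} {s : Σ i : Fin n, Fin (p i)} :
    (pufferGraph n p).Adj (Sum.inl i) (Sum.inr s) ↔ s.1 = i := by
  simp only [pufferGraph, fromRel_adj, ne_eq]
  constructor
  · rintro ⟨-, (⟨a, b, -, h, -⟩ | ⟨a, x, ha, hs⟩) | (⟨a, b, h, -⟩ | ⟨a, x, h, -⟩)⟩
    all_goals first | cases h | (cases ha; cases hs; rfl)
  · rintro rfl
    exact ⟨Sum.inl_ne_inr, Or.inl (Or.inr ⟨s.1, s.2, rfl, rfl⟩)⟩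

@[simp]
lemma adj_inr_inl {i : Fin n} {s : Σ i : Fin n, Fin (p i)} :
    (pufferGraph n p).Adj (Sum.inr s) (Sum.inl i) ↔ s.1 = i := by
  rw [adj_comm, adj_inl_inr]

@[simp]
lemma not_adj_inr_inr {s t : Σ i : Fin n, Fin (p i)} :
    ¬ (pufferGraph n p).Adj (Sum.inr s) (Sum.inr t) := by
  simp only [pufferGraph, fromRel_adj, ne_eq]
  rintro ⟨-, (⟨a, b, h, -⟩ | ⟨a, x, h, -⟩) | (⟨a, b, h, -⟩ | ⟨a, x, h, -⟩)⟩ <;> cases h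

lemma neighborSet_inl (i : Fin n) :
    (pufferGraph n p).neighborSet (Sum.inl i) =
      Sum.inl '' (cycleGraph n).neighborSet i ∪ Sum.inr '' Set.range (Sigma.mk i) := by
  ext (j | s)
  · simp
  · simp [eq_comm]

lemma sdeg_inl (i : Fin n) :
    sdeg (pufferGraph n p) (Sum.inl i) = (cycleGraph n).degree i + p i := by
  have hdisj : Disjoint (Sum.inl '' (cycleGraph n).neighborSet i)
      (Sum.inr '' Set.range (Sigma.mk (β := fun j => Fin (p j)) i)) :=
    Set.disjoint_left.mpr fun _ ⟨_, _, hj⟩ ⟨_, _, hs⟩ => Sum.inl_ne_inr (hj.trans hs.symm)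
  rw [sdeg, neighborSet_inl, Set.ncard_union_eq hdisj,
    Set.ncard_image_of_injective _ Sum.inl_injective,
    Set.ncard_image_of_injective _ Sum.inr_injective, ← Set.image_univ,
    Set.ncard_image_of_injective _ sigma_mk_injective, Set.ncard_univ, Nat.card_eq_fintype_card,
    Fintype.card_fin, Set.ncard_eq_toFinset_card', ← neighborFinset_def, card_neighborFinset_eq_degree]

lemma sdeg_inl_eq_two_add {p : Fin (n + 3) → ℕ} (i : Fin (n + 3)) :
    sdeg (pufferGraph (n + 3) p) (Sum.inl i) = 2 + p i := by
  rw [sdeg_inl, cycleGraph_degree_three_le]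

lemma le_maxCycleDegSum {i j : Fin n} (h : (cycleGraph n).Adj i j) :
    sdeg (pufferGraph n p) (Sum.inl i) + sdeg (pufferGraph n p) (Sum.inl j) ≤
      maxCycleDegSum n p := by
  unfold maxCycleDegSum
  refine le_trans ?_ (Finset.le_sup (Finset.mem_univ (i, j)))
  rw [if_pos h]

lemma maxCycleDegSum_le {m : ℕ}
    (h : ∀ i j, (cycleGraph n).Adj i j →
      sdeg (pufferGraph n p) (Sum.inl i) + sdeg (pufferGraph n p) (Sum.inl j) ≤ m) :
    maxCycleDegSum n p ≤ m := by
  refine Finset.sup_le fun q _ => ?_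
  split_ifs with hq
  exacts [h q.1 q.2 hq, Nat.zero_le m]

variable (p) in
def cycleEdge [NeZero n] (i : Fin n) : Sym2 (Fin n ⊕ Σ i : Fin n, Fin (p i)) :=
  s(Sum.inl i, Sum.inl (i + 1))

def pendantEdge (i : Fin n) (x : Fin (p i)) : Sym2 (Fin n ⊕ Σ i : Fin n, Fin (p i)) :=
  s(Sum.inl i, Sum.inr ⟨i, x⟩)

lemma cycleEdge_mem_edgeSet {p : Fin (n + 2) → ℕ} (i : Fin (n + 2)) :
    cycleEdge p i ∈ (pufferGraph (n + 2) p).edgeSet :=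
  adj_inl_inl.mpr (cycleGraph_adj.mpr (Or.inr (add_sub_cancel_left i 1)))

lemma pendantEdge_mem_edgeSet (i : Fin n) (x : Fin (p i)) :
    pendantEdge i x ∈ (pufferGraph n p).edgeSet :=
  adj_inl_inr.mpr rfl

lemma mem_edgeSet_iff {p : Fin (n + 2) → ℕ} {e : Sym2 (Fin (n + 2) ⊕ Σ i, Fin (p i))} :
    e ∈ (pufferGraph (n + 2) p).edgeSet ↔
      (∃ i, e = cycleEdge p i) ∨ ∃ i x, e = pendantEdge i x := by
  constructor
  · induction e with | _ u v => ?_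
    rintro (huv : (pufferGraph (n + 2) p).Adj u v)
    rcases u with i | ⟨i, x⟩ <;> rcases v with j | ⟨j, y⟩
    · rcases cycleGraph_adj_iff_eq_add_one.mp (adj_inl_inl.mp huv) with rfl | rfl
      · exact Or.inl ⟨i, rfl⟩
      · exact Or.inl ⟨j, Sym2.eq_swap⟩
    · obtain rfl : j = i := adj_inl_inr.mp huv
      exact Or.inr ⟨j, y, rfl⟩
    · obtain rfl : i = j := adj_inr_inl.mp huv
      exact Or.inr ⟨i, x, Sym2.eq_swap⟩
    · exact absurd huv not_adj_inr_inr
  · rintro (⟨i, rfl⟩ | ⟨i, x, rfl⟩)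
    · exact cycleEdge_mem_edgeSet i
    · exact pendantEdge_mem_edgeSet i x

lemma not_edgesNear_pendantEdge {i j : Fin n} (hne : i ≠ j) (hadj : ¬ (cycleGraph n).Adj i j)
    (x : Fin (p i)) (y : Fin (p j)) :
    ¬ EdgesNear (pufferGraph n p) (pendantEdge i x) (pendantEdge j y) := by
  rintro (⟨z, hzx, hzy⟩ | ⟨z, w, hz, hw, hzw⟩)
  · simp only [pendantEdge, Sym2.mem_iff] at hzx hzy
    rcases hzx with rfl | rfl <;> rcases hzy with h | h <;> simp_all
  · simp only [pendantEdge, Sym2.mem_iff] at hz hw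
    rcases hz with rfl | rfl <;> rcases hw with rfl | rfl <;> simp_all [eq_comm]

lemma edgesNear_of_inl_mem {e f : Sym2 (Fin n ⊕ Σ i : Fin n, Fin (p i))} {i j : Fin n}
    (hi : Sum.inl i ∈ e) (hj : Sum.inl j ∈ f) (h : i = j ∨ (cycleGraph n).Adj i j) :
    EdgesNear (pufferGraph n p) e f :=
  EdgesNear.of_mem hi hj (by simpa using h)

@[simp]
lemma pendantEdge_inj {i j : Fin n} {x : Fin (p i)} {y : Fin (p j)} :
    pendantEdge i x = pendantEdge j y ↔ (⟨i, x⟩ : Σ i, Fin (p i)) = ⟨j, y⟩ := by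
  simp [pendantEdge]

@[simp]
lemma cycleEdge_ne_pendantEdge [NeZero n] (i j : Fin n) (x : Fin (p j)) :
    cycleEdge p i ≠ pendantEdge j x := by
  simp [cycleEdge, pendantEdge]

end pufferGraph

namespace pufferGraph

variable {p : Fin 4 → ℕ}

lemma cycleEdge_injective_four : Function.Injective (cycleEdge p) := by
  intro i j h
  simp only [cycleEdge, Sym2.eq_iff, Sum.inl.injEq] at h
  rcases h with ⟨h, -⟩ | ⟨rfl, h⟩
  · exact h
  · exact absurd h (by revert j; decide)

lemma edgesNear_cycleEdge_cycleEdge_four (i j : Fin 4) :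
    EdgesNear (pufferGraph 4 p) (cycleEdge p i) (cycleEdge p j) := by
  obtain ⟨u, hu, v, hv, huv⟩ : ∃ u, (u = i ∨ u = i + 1) ∧ ∃ v, (v = j ∨ v = j + 1) ∧
      (u = v ∨ (cycleGraph 4).Adj u v) := by
    revert i j; decide
  exact edgesNear_of_inl_mem (by rcases hu with rfl | rfl <;> simp [cycleEdge])
    (by rcases hv with rfl | rfl <;> simp [cycleEdge]) huv

lemma edgesNear_cycleEdge_pendantEdge_four (i j : Fin 4) (x : Fin (p j)) :
    EdgesNear (pufferGraph 4 p) (cycleEdge p i) (pendantEdge j x) := by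
  have hclose : ∀ i j : Fin 4, ∃ u, (u = i ∨ u = i + 1) ∧ (u = j ∨ (cycleGraph 4).Adj u j) := by
    decide
  obtain ⟨u, hu, huj⟩ := hclose i j
  exact edgesNear_of_inl_mem (by rcases hu with rfl | rfl <;> simp [cycleEdge])
    (by simp [pendantEdge]) huj

lemma four_add_le_of_isStrongEdgeColoring {a b : Fin 4} (hab : (cycleGraph 4).Adj a b) {k : ℕ}
    {c : Sym2 (Fin 4 ⊕ Σ i, Fin (p i)) → ℕ} (hc : IsStrongEdgeColoring (pufferGraph 4 p) k c) :
    4 + p a + p b ≤ k := by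
  have hcard := hc.card_le_of_pairwise_edgesNear
    (F := Sum.elim (cycleEdge p) (Sum.elim (pendantEdge a) (pendantEdge b))) ?inj ?mem ?near
  · simpa [add_assoc] using hcard
  case inj =>
    refine cycleEdge_injective_four.sumElim ?_ (by simp)
    refine Function.Injective.sumElim (fun x y h => by simpa using h)
      (fun x y h => by simpa using h) fun x y h => hab.ne ?_
    exact congrArg Sigma.fst (pendantEdge_inj.mp h)
  case mem =>
    rintro (i | x | y)
    exacts [cycleEdge_mem_edgeSet i, pendantEdge_mem_edgeSet a x, pendantEdge_mem_edgeSet b y]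
  case near =>
    have hpend : ∀ {i j : Fin 4}, (cycleGraph 4).Adj i j ∨ i = j → ∀ x y,
        EdgesNear (pufferGraph 4 p) (pendantEdge i x) (pendantEdge j y) := fun h _ _ =>
      edgesNear_of_inl_mem (by simp [pendantEdge]) (by simp [pendantEdge]) h.symm
    rintro (i | x | y) (j | x' | y') -
    all_goals simp only [Sum.elim_inl, Sum.elim_inr]
    · exact edgesNear_cycleEdge_cycleEdge_four i j
    · exact edgesNear_cycleEdge_pendantEdge_four i a x'
    · exact edgesNear_cycleEdge_pendantEdge_four i b y'
    · exact (edgesNear_cycleEdge_pendantEdge_four j a x).symm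
    · exact hpend (Or.inr rfl) x x'
    · exact hpend (Or.inl hab) x y'
    · exact (edgesNear_cycleEdge_pendantEdge_four j b y).symm
    · exact hpend (Or.inl hab.symm) y x'
    · exact hpend (Or.inr rfl) y y'

def c4PendantBase (p : Fin 4 → ℕ) (i : Fin 4) : ℕ :=
  if i.val % 2 = 0 then 4 else 4 + max (p 0) (p 2)

def c4PairColor (p : Fin 4 → ℕ) : Fin 4 ⊕ (Σ i, Fin (p i)) → Fin 4 ⊕ (Σ i, Fin (p i)) → ℕ
  | .inl i, .inl j => if j = i + 1 then i else if i = j + 1 then j else 0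
  | .inl _, .inr s | .inr s, .inl _ => c4PendantBase p s.1 + s.2
  | .inr _, .inr _ => 0

lemma c4PairColor_comm (p : Fin 4 → ℕ) (u v : Fin 4 ⊕ Σ i, Fin (p i)) :
    c4PairColor p u v = c4PairColor p v u := by
  rcases u with i | s <;> rcases v with j | t <;> simp only [c4PairColor]
  revert i j; decide

def c4EdgeColoring (p : Fin 4 → ℕ) : Sym2 (Fin 4 ⊕ Σ i, Fin (p i)) → ℕ :=
  Sym2.lift ⟨c4PairColor p, c4PairColor_comm p⟩

@[simp]
lemma c4EdgeColoring_cycleEdge (i : Fin 4) : c4EdgeColoring p (cycleEdge p i) = i := by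
  simp [c4EdgeColoring, cycleEdge, c4PairColor]

@[simp]
lemma c4EdgeColoring_pendantEdge (i : Fin 4) (x : Fin (p i)) :
    c4EdgeColoring p (pendantEdge i x) = c4PendantBase p i + x := by
  simp [c4EdgeColoring, pendantEdge, c4PairColor]

lemma four_le_c4PendantBase (i : Fin 4) : 4 ≤ c4PendantBase p i := by
  unfold c4PendantBase; split_ifs <;> omega

lemma c4PendantBase_add_lt (i : Fin 4) (x : Fin (p i)) :
    c4PendantBase p i + x < 4 + max (p 0) (p 2) + max (p 1) (p 3) := by
  have hx := x.isLt
  fin_cases i <;> simp [c4PendantBase] at hx ⊢ <;> omega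

lemma c4PendantBase_add_lt_of_even_of_odd {i j : Fin 4} (hi : i.val % 2 = 0)
    (hj : j.val % 2 = 1) (x : Fin (p i)) : c4PendantBase p i + x < c4PendantBase p j := by
  have heven : ∀ i : Fin 4, i.val % 2 = 0 → i = 0 ∨ i = 2 := by decide
  have hpi : p i ≤ max (p 0) (p 2) := by rcases heven i hi with rfl | rfl <;> omega
  rw [c4PendantBase, c4PendantBase, if_pos hi, if_neg (by omega)]
  omega

lemma c4EdgeColoring_pendantEdge_ne {i j : Fin 4} {x : Fin (p i)} {y : Fin (p j)}
    (hne : pendantEdge i x ≠ pendantEdge j y)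
    (hnear : EdgesNear (pufferGraph 4 p) (pendantEdge i x) (pendantEdge j y)) :
    c4EdgeColoring p (pendantEdge i x) ≠ c4EdgeColoring p (pendantEdge j y) := by
  simp only [c4EdgeColoring_pendantEdge]
  by_cases hij : i = j
  · subst hij
    exact fun h => hne (congrArg _ (Fin.ext (by omega)))
  have hopp : ∀ i j : Fin 4, i ≠ j → i.val % 2 = j.val % 2 → ¬ (cycleGraph 4).Adj i j := by
    decide
  by_cases hpar : i.val % 2 = j.val % 2
  · exact absurd hnear (not_edgesNear_pendantEdge hij (hopp i j hij hpar) x y)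
  rcases Nat.mod_two_eq_zero_or_one i.val with hi | hi
  · have := c4PendantBase_add_lt_of_even_of_odd hi (by omega) x (j := j)
    omega
  · have := c4PendantBase_add_lt_of_even_of_odd (by omega) hi y (i := j) (j := i)
    omega

lemma isStrongEdgeColoring_c4EdgeColoring (p : Fin 4 → ℕ) :
    IsStrongEdgeColoring (pufferGraph 4 p) (4 + max (p 0) (p 2) + max (p 1) (p 3))
      (c4EdgeColoring p) := by
  refine ⟨fun e he => ?_, fun e he f hf hne hnear => ?_⟩
  · rcases mem_edgeSet_iff.mp he with ⟨i, rfl⟩ | ⟨i, x, rfl⟩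
    · simp only [c4EdgeColoring_cycleEdge]
      omega
    · simpa using c4PendantBase_add_lt i x
  · rcases mem_edgeSet_iff.mp he with ⟨i, rfl⟩ | ⟨i, x, rfl⟩ <;>
      rcases mem_edgeSet_iff.mp hf with ⟨j, rfl⟩ | ⟨j, y, rfl⟩
    · simp only [c4EdgeColoring_cycleEdge, ne_eq, Fin.val_inj]
      exact fun h => hne (congrArg _ h)
    · have := four_le_c4PendantBase (p := p) j
      simp only [c4EdgeColoring_cycleEdge, c4EdgeColoring_pendantEdge]
      omega
    · have := four_le_c4PendantBase (p := p) i
      simp only [c4EdgeColoring_cycleEdge, c4EdgeColoring_pendantEdge]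
      omega
    · exact c4EdgeColoring_pendantEdge_ne hne hnear

lemma four_add_max_add_max_le_maxCycleDegSum (p : Fin 4 → ℕ) :
    4 + max (p 0) (p 2) + max (p 1) (p 3) ≤ maxCycleDegSum 4 p := by
  have hadj : ∀ a ∈ ({0, 2} : Finset (Fin 4)), ∀ b ∈ ({1, 3} : Finset (Fin 4)),
      (cycleGraph 4).Adj a b := by
    decide
  obtain ⟨a, ha, hpa⟩ : ∃ a ∈ ({0, 2} : Finset (Fin 4)), p a = max (p 0) (p 2) := by
    rcases max_choice (p 0) (p 2) with h | h <;> simp [h]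
  obtain ⟨b, hb, hpb⟩ : ∃ b ∈ ({1, 3} : Finset (Fin 4)), p b = max (p 1) (p 3) := by
    rcases max_choice (p 1) (p 3) with h | h <;> simp [h]
  have := le_maxCycleDegSum (p := p) (hadj a ha b hb)
  rw [sdeg_inl_eq_two_add, sdeg_inl_eq_two_add] at this
  omega

end pufferGraph

/-- For a 4-cycle with (possibly no) pendant edges attached at its vertices, the strong
chromatic index equals the maximum of `d(u) + d(v)` over the edges `uv` of the cycle. -/
theorem sci_C4_puffer (p : Fin 4 → ℕ) :
    sci (pufferGraph 4 p) = maxCycleDegSum 4 p := by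
  refine sci_eq_of_isStrongEdgeColoring
    ((pufferGraph.isStrongEdgeColoring_c4EdgeColoring p).mono
      (pufferGraph.four_add_max_add_max_le_maxCycleDegSum p))
    fun k c hc => pufferGraph.maxCycleDegSum_le fun a b hab => ?_
  rw [pufferGraph.sdeg_inl_eq_two_add, pufferGraph.sdeg_inl_eq_two_add]
  have := pufferGraph.four_add_le_of_isStrongEdgeColoring hab hc
  omega
end

section
/- Let G ≠ C_{2k} be obtained from an even cycle C_{2k} with 2k ≥ 6 and 2k ≡ 0 (mod 3) by attaching pendant edges at cycle vertices (at least one pendant edge in total). Then the strong chromatic index of G equals the maximum of d(u) + d(v) − 1 over edges uv of the cycle. -/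
/-!
Any two edges meeting an edge `uv` are within distance two of each other, and there are
`d(u) + d(v) - 1` of them; this is the lower bound, valid in every finite graph. Conversely a
colouring is strong as soon as it is injective on the edges meeting each edge, and in the cycle
with pendant edges every such set lies inside the one of a cycle edge `{i, i + 1}`. Colour the
cycle edge `{i, j}` by `(i + j) mod 3`, which separates any three consecutive cycle edges because
`3 ∣ n`, and let `m` be the largest `p i + p (i + 1)`: pendant edges at even vertices get the
colours `3, 4, …` upwards, those at odd vertices the colours `m + 2, m + 1, …` downwards.
As `n` is even, consecutive cycle vertices have opposite parity, so their pendant colours never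
meet, and `m + 3` colours suffice.
-/

open SimpleGraph

section StrongEdgeColoring

variable {V : Type*} {G : SimpleGraph V} {c : Sym2 V → ℕ}

theorem incidenceSet_eq_image_neighborSet (v : V) :
    G.incidenceSet v = (fun w => s(v, w)) '' G.neighborSet v := by
  ext e
  constructor
  · rintro ⟨he, hv⟩
    exact ⟨Sym2.Mem.other hv, by rwa [mem_neighborSet, ← mem_edgeSet, Sym2.other_spec],
      Sym2.other_spec hv⟩
  · rintro ⟨w, hw, rfl⟩
    exact (G.mem_incidenceSet v w).2 hw

theorem ncard_incidenceSet (v : V) : (G.incidenceSet v).ncard = sdeg G v := by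
  classical
  rw [sdeg, ← Nat.card_coe_set_eq, ← Nat.card_coe_set_eq]
  exact Nat.card_congr (G.incidenceSetEquivNeighborSet v)

theorem ncard_incidenceSet_union_add_one [Finite V] {u v : V} (huv : G.Adj u v) :
    (G.incidenceSet u ∪ G.incidenceSet v).ncard + 1 = sdeg G u + sdeg G v := by
  rw [← ncard_incidenceSet, ← ncard_incidenceSet, ← Set.ncard_union_add_ncard_inter,
    G.incidenceSet_inter_incidenceSet_of_adj huv, Set.ncard_singleton]

theorem edgesNear_of_mem_incidenceSet_union {u v : V} (huv : G.Adj u v) {e f : Sym2 V}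
    (he : e ∈ G.incidenceSet u ∪ G.incidenceSet v)
    (hf : f ∈ G.incidenceSet u ∪ G.incidenceSet v) : EdgesNear G e f := by
  rcases he with ⟨-, heu⟩ | ⟨-, hev⟩ <;> rcases hf with ⟨-, hfu⟩ | ⟨-, hfv⟩
  · exact Or.inl ⟨u, heu, hfu⟩
  · exact Or.inr ⟨u, v, heu, hfv, huv⟩
  · exact Or.inr ⟨v, u, hev, hfu, huv.symm⟩
  · exact Or.inl ⟨v, hev, hfv⟩

theorem isStrongEdgeColoringOn_iff_injOn :
    IsStrongEdgeColoringOn G c ↔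
      ∀ u v, G.Adj u v → Set.InjOn c (G.incidenceSet u ∪ G.incidenceSet v) := by
  constructor
  · intro hc u v huv e he f hf hef
    by_contra hne
    have hsub := Set.union_subset (G.incidenceSet_subset u) (G.incidenceSet_subset v)
    exact hc e (hsub he) f (hsub hf) hne (edgesNear_of_mem_incidenceSet_union huv he hf) hef
  · intro hc e he f hf hne hnear hef
    rcases hnear with ⟨x, hxe, hxf⟩ | ⟨x, y, hxe, hyf, hxy⟩
    · -- two edges sharing `x` both meet the edge `e` itself
      have hadj : G.Adj x (Sym2.Mem.other hxe) := by rwa [← mem_edgeSet, Sym2.other_spec]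
      exact hne (hc _ _ hadj (Or.inl ⟨he, hxe⟩) (Or.inl ⟨hf, hxf⟩) hef)
    · exact hne (hc x y hxy (Or.inl ⟨he, hxe⟩) (Or.inr ⟨hf, hyf⟩) hef)

theorem IsStrongEdgeColoring.sdeg_add_sdeg_le [Finite V] {k : ℕ}
    (hc : IsStrongEdgeColoring G k c) {u v : V} (huv : G.Adj u v) :
    sdeg G u + sdeg G v ≤ k + 1 := by
  have hsub := Set.union_subset (G.incidenceSet_subset u) (G.incidenceSet_subset v)
  have hcard : (G.incidenceSet u ∪ G.incidenceSet v).ncard ≤ (Set.Iio k).ncard :=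
    Set.ncard_le_ncard_of_injOn c (fun e he => hc.1 e (hsub he))
      (isStrongEdgeColoringOn_iff_injOn.1 hc.2 u v huv) (Set.finite_Iio k)
  rw [Set.ncard_Iio_nat] at hcard
  have := ncard_incidenceSet_union_add_one huv
  omega

theorem sci_le {k : ℕ} (hc : IsStrongEdgeColoring G k c) : sci G ≤ k :=
  Nat.sInf_le ⟨c, hc⟩

theorem exists_isStrongEdgeColoring_sci [Finite V] : ∃ c, IsStrongEdgeColoring G (sci G) c := by
  let ι := Finite.equivFin (Sym2 V)
  have hι : IsStrongEdgeColoring G (Nat.card (Sym2 V)) (fun e => ι e) :=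
    ⟨fun e _ => (ι e).isLt, fun e _ f _ hne _ hef => hne (ι.injective (Fin.ext hef))⟩
  exact Nat.sInf_mem (s := {k | ∃ c, IsStrongEdgeColoring G k c}) ⟨_, _, hι⟩

theorem sdeg_add_sdeg_le_sci_add_one [Finite V] {u v : V} (huv : G.Adj u v) :
    sdeg G u + sdeg G v ≤ sci G + 1 :=
  (exists_isStrongEdgeColoring_sci (G := G)).elim fun _ hc => hc.sdeg_add_sdeg_le huv

end StrongEdgeColoring

section Cycle

variable {n : ℕ} [NeZero n]

theorem Fin.val_add_one_mod_of_dvd {d : ℕ} (hd : d ∣ n) (i : Fin n) :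
    (i + 1).val % d = (i.val + 1) % d := by
  rw [Fin.val_add, Nat.mod_mod_of_dvd _ hd, Fin.val_one', Nat.add_mod,
    Nat.mod_mod_of_dvd _ hd, ← Nat.add_mod]

theorem Fin.sub_one_ne_add_one (hn : 3 ≤ n) (i : Fin n) : i - 1 ≠ i + 1 := by
  rw [Ne, sub_eq_iff_eq_add, add_assoc, left_eq_add, Fin.ext_iff, Fin.val_add, Fin.val_one',
    Fin.val_zero, Nat.one_mod_eq_one.2 (by omega), Nat.mod_eq_of_lt (by omega)]
  omega

theorem cycleGraph_neighborSet_of_two_le (hn : 2 ≤ n) (i : Fin n) :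
    (cycleGraph n).neighborSet i = {i - 1, i + 1} := by
  obtain ⟨m, rfl⟩ : ∃ m, n = m + 2 := ⟨n - 2, by omega⟩
  exact cycleGraph_neighborSet

theorem cycleGraph_adj_add_one (hn : 2 ≤ n) (i : Fin n) : (cycleGraph n).Adj i (i + 1) := by
  rw [← mem_neighborSet, cycleGraph_neighborSet_of_two_le hn]
  exact Or.inr rfl

end Cycle

section PufferGraph

open Sum

variable {n : ℕ} {p : Fin n → ℕ}

@[simp]
theorem pufferGraph_adj_inl_inl {i j : Fin n} :
    (pufferGraph n p).Adj (inl i) (inl j) ↔ (cycleGraph n).Adj i j := by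
  simp only [pufferGraph, fromRel_adj, ne_eq, inl.injEq, exists_and_left, exists_eq_left',
    reduceCtorEq, exists_false, and_false, or_false, adj_comm (cycleGraph n) j, or_self,
    and_iff_right_iff_imp]
  exact fun h => h.ne

@[simp]
theorem pufferGraph_adj_inl_inr {i : Fin n} {s : Σ i : Fin n, Fin (p i)} :
    (pufferGraph n p).Adj (inl i) (inr s) ↔ s.1 = i := by
  simp only [pufferGraph, fromRel_adj, ne_eq, reduceCtorEq, not_false_eq_true, inl.injEq,
    inr.injEq, exists_and_left, exists_false, exists_eq_left', false_and, and_false, false_or,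
    and_self, or_self, or_false, true_and]
  exact ⟨by rintro ⟨x, rfl⟩; rfl, by rintro rfl; exact ⟨s.2, rfl⟩⟩

@[simp]
theorem pufferGraph_adj_inr_inl {i : Fin n} {s : Σ i : Fin n, Fin (p i)} :
    (pufferGraph n p).Adj (inr s) (inl i) ↔ s.1 = i := by
  rw [adj_comm, pufferGraph_adj_inl_inr]

@[simp]
theorem pufferGraph_not_adj_inr_inr {s t : Σ i : Fin n, Fin (p i)} :
    ¬(pufferGraph n p).Adj (inr s) (inr t) := by
  simp [pufferGraph]

theorem pufferGraph_neighborSet_inl [NeZero n] (hn : 2 ≤ n) (i : Fin n) :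
    (pufferGraph n p).neighborSet (inl i) =
      {inl (i - 1), inl (i + 1)} ∪ Set.range (fun x => inr ⟨i, x⟩) := by
  ext (j | s)
  · rw [mem_neighborSet, pufferGraph_adj_inl_inl, ← mem_neighborSet,
      cycleGraph_neighborSet_of_two_le hn]
    simp
  · simp only [mem_neighborSet, pufferGraph_adj_inl_inr, Set.mem_union, Set.mem_insert_iff,
      Set.mem_singleton_iff, Set.mem_range, reduceCtorEq, inr.injEq, or_self, false_or]
    exact ⟨by rintro rfl; exact ⟨s.2, rfl⟩, by rintro ⟨x, rfl⟩; rfl⟩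

theorem pufferGraph_neighborSet_inr (s : Σ i : Fin n, Fin (p i)) :
    (pufferGraph n p).neighborSet (inr s) = {inl s.1} := by
  ext (j | t) <;> simp [eq_comm]

theorem sdeg_pufferGraph_inl [NeZero n] (hn : 3 ≤ n) (i : Fin n) :
    sdeg (pufferGraph n p) (inl i) = p i + 2 := by
  have hdisj : Disjoint ({inl (i - 1), inl (i + 1)} : Set (Fin n ⊕ Σ i : Fin n, Fin (p i)))
      (Set.range (fun x => inr ⟨i, x⟩)) := by
    simp [Set.disjoint_right]
  rw [sdeg, pufferGraph_neighborSet_inl (by omega), Set.ncard_union_eq hdisj,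
    Set.ncard_pair (by simpa using Fin.sub_one_ne_add_one hn i),
    Set.ncard_range_of_injective (fun x y h => by simpa using h), Nat.card_eq_fintype_card,
    Fintype.card_fin, add_comm]

theorem pufferGraph_incidenceSet_inl [NeZero n] (hn : 2 ≤ n) (i : Fin n) :
    (pufferGraph n p).incidenceSet (inl i) =
      {s(inl i, inl (i - 1)), s(inl i, inl (i + 1))} ∪
        Set.range (fun x => s(inl i, inr ⟨i, x⟩)) := by
  rw [incidenceSet_eq_image_neighborSet, pufferGraph_neighborSet_inl hn, Set.image_union,
    Set.image_pair, ← Set.range_comp]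
  rfl

theorem pufferGraph_incidenceSet_inr_subset (s : Σ i : Fin n, Fin (p i)) :
    (pufferGraph n p).incidenceSet (inr s) ⊆ (pufferGraph n p).incidenceSet (inl s.1) := by
  rw [incidenceSet_eq_image_neighborSet, pufferGraph_neighborSet_inr, Set.image_singleton,
    Set.singleton_subset_iff, mk'_mem_incidenceSet_right_iff, pufferGraph_adj_inr_inl]

theorem pufferGraph_exists_incidenceSet_union_subset [NeZero n] (hn : 2 ≤ n)
    {u v : Fin n ⊕ Σ i : Fin n, Fin (p i)} (huv : (pufferGraph n p).Adj u v) :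
    ∃ i : Fin n, (pufferGraph n p).incidenceSet u ∪ (pufferGraph n p).incidenceSet v ⊆
      (pufferGraph n p).incidenceSet (inl i) ∪ (pufferGraph n p).incidenceSet (inl (i + 1)) := by
  rcases u with i | s <;> rcases v with j | t
  · rw [pufferGraph_adj_inl_inl, ← mem_neighborSet, cycleGraph_neighborSet_of_two_le hn] at huv
    rcases huv with rfl | rfl
    · exact ⟨i - 1, by rw [sub_add_cancel, Set.union_comm]⟩
    · exact ⟨i, subset_rfl⟩
  · rw [pufferGraph_adj_inl_inr] at huv
    subst huv
    exact ⟨t.1, Set.union_subset Set.subset_union_left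
      ((pufferGraph_incidenceSet_inr_subset t).trans Set.subset_union_left)⟩
  · rw [pufferGraph_adj_inr_inl] at huv
    subst huv
    exact ⟨s.1, Set.union_subset
      ((pufferGraph_incidenceSet_inr_subset s).trans Set.subset_union_left) Set.subset_union_left⟩
  · exact absurd huv pufferGraph_not_adj_inr_inr

theorem le_maxCycleDegSum {i j : Fin n} (h : (cycleGraph n).Adj i j) :
    sdeg (pufferGraph n p) (inl i) + sdeg (pufferGraph n p) (inl j) ≤ maxCycleDegSum n p := by
  unfold maxCycleDegSum
  refine le_trans ?_ (Finset.le_sup (Finset.mem_univ (i, j)))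
  rw [if_pos h]

theorem maxCycleDegSum_le {b : ℕ}
    (h : ∀ i j, (cycleGraph n).Adj i j →
      sdeg (pufferGraph n p) (inl i) + sdeg (pufferGraph n p) (inl j) ≤ b) :
    maxCycleDegSum n p ≤ b :=
  Finset.sup_le fun q _ => by
    split_ifs with hq
    exacts [h q.1 q.2 hq, Nat.zero_le b]

end PufferGraph

section PufferColouring

open Sum

variable {n : ℕ} {p : Fin n → ℕ} {m : ℕ}

def pendantColour (m : ℕ) (s : Σ i : Fin n, Fin (p i)) : ℕ :=
  if s.1.val % 2 = 0 then s.2.val else m - 1 - s.2.val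

def pufferColourPair (p : Fin n → ℕ) (m : ℕ) :
    Fin n ⊕ (Σ i : Fin n, Fin (p i)) → Fin n ⊕ (Σ i : Fin n, Fin (p i)) → ℕ
  | inl i, inl j => (i.val + j.val) % 3
  | inl _, inr s | inr s, inl _ => 3 + pendantColour m s
  | inr _, inr _ => 0

def pufferColouring (p : Fin n → ℕ) (m : ℕ) :
    Sym2 (Fin n ⊕ Σ i : Fin n, Fin (p i)) → ℕ :=
  Sym2.lift ⟨pufferColourPair p m, by
    rintro (i | s) (j | t) <;> simp only [pufferColourPair, add_comm]⟩

@[simp]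
theorem pufferColouring_inl_inl (i j : Fin n) :
    pufferColouring p m s(inl i, inl j) = (i.val + j.val) % 3 := rfl

@[simp]
theorem pufferColouring_inl_inr (i : Fin n) (s : Σ i : Fin n, Fin (p i)) :
    pufferColouring p m s(inl i, inr s) = 3 + pendantColour m s := rfl

theorem pufferColouring_lt (hm : ∀ i, p i ≤ m) (e : Sym2 (Fin n ⊕ Σ i : Fin n, Fin (p i))) :
    pufferColouring p m e < m + 3 := by
  have hs (s : Σ i : Fin n, Fin (p i)) : pendantColour m s < m := by
    have := hm s.1
    have := s.2.isLt
    unfold pendantColour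
    split_ifs <;> omega
  induction e using Sym2.ind with
  | _ a b =>
    rcases a with i | s <;> rcases b with j | t
    · exact (Nat.mod_lt _ (by norm_num)).trans_le (by omega)
    · have := hs t
      rw [pufferColouring_inl_inr]
      omega
    · have := hs s
      rw [Sym2.eq_swap, pufferColouring_inl_inr]
      omega
    · exact Nat.add_pos_right _ (by norm_num)

theorem pufferColouring_injOn [NeZero n] (h2 : 2 ∣ n) (h3 : 3 ∣ n) (i : Fin n)
    (hm : p i + p (i + 1) ≤ m) :
    Set.InjOn (pufferColouring p m)
      ((pufferGraph n p).incidenceSet (inl i) ∪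
        (pufferGraph n p).incidenceSet (inl (i + 1))) := by
  have hn : 2 ≤ n := Nat.le_of_dvd (Nat.pos_of_neZero n) h2
  have hsucc := Fin.val_add_one_mod_of_dvd h3 i
  have hsucc' := Fin.val_add_one_mod_of_dvd h3 (i + 1)
  have hpred := Fin.val_add_one_mod_of_dvd h3 (i - 1)
  rw [sub_add_cancel] at hpred
  have hparity :
      i.val % 2 = 0 ∧ (i + 1).val % 2 = 1 ∨ i.val % 2 = 1 ∧ (i + 1).val % 2 = 0 := by
    have := Fin.val_add_one_mod_of_dvd h2 i
    omega
  rw [pufferGraph_incidenceSet_inl hn, pufferGraph_incidenceSet_inl hn]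
  intro e he f hf hef
  simp only [Set.mem_union, Set.mem_insert_iff, Set.mem_singleton_iff, Set.mem_range] at he hf
  rcases hparity with ⟨hi, hi'⟩ | ⟨hi, hi'⟩ <;>
  rcases he with ((rfl | rfl) | ⟨x, rfl⟩) | ((rfl | rfl) | ⟨x, rfl⟩) <;>
  rcases hf with ((rfl | rfl) | ⟨y, rfl⟩) | ((rfl | rfl) | ⟨y, rfl⟩) <;>
  simp only [pufferColouring_inl_inl, pufferColouring_inl_inr, pendantColour, hi, hi', ↓reduceIte,
    add_sub_cancel_right, Sym2.eq, Sym2.rel_iff', Prod.mk.injEq, Prod.swap_prod_mk, inl.injEq,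
    inr.injEq, reduceCtorEq, Sigma.mk.injEq, heq_eq_eq, Fin.ext_iff, Nat.add_left_cancel_iff,
    and_true, true_and, and_false, false_and, and_self, or_false, or_true, or_self] at hef ⊢ <;>
    omega

theorem pufferColouring_isStrongEdgeColoring [NeZero n] (h2 : 2 ∣ n) (h3 : 3 ∣ n)
    (hm : ∀ i, p i + p (i + 1) ≤ m) :
    IsStrongEdgeColoring (pufferGraph n p) (m + 3) (pufferColouring p m) := by
  refine ⟨fun e _ => pufferColouring_lt (fun i => (Nat.le_add_right _ _).trans (hm i)) e,
    isStrongEdgeColoringOn_iff_injOn.2 fun u v huv => ?_⟩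
  obtain ⟨i, hi⟩ :=
    pufferGraph_exists_incidenceSet_union_subset (Nat.le_of_dvd (Nat.pos_of_neZero n) h2) huv
  exact (pufferColouring_injOn h2 h3 i (hm i)).mono hi

end PufferColouring

section PufferSci

variable {n : ℕ} {p : Fin n → ℕ}

theorem maxCycleDegSum_sub_one_le_sci : maxCycleDegSum n p - 1 ≤ sci (pufferGraph n p) :=
  Nat.sub_le_iff_le_add.2 <| maxCycleDegSum_le fun _ _ h =>
    sdeg_add_sdeg_le_sci_add_one (pufferGraph_adj_inl_inl.2 h)

theorem sci_pufferGraph_le [NeZero n] (h2 : 2 ∣ n) (h3 : 3 ∣ n) :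
    sci (pufferGraph n p) ≤ maxCycleDegSum n p - 1 := by
  have hn : 3 ≤ n := Nat.le_of_dvd (Nat.pos_of_neZero n) h3
  have hsum (i : Fin n) : p i + p (i + 1) + 4 ≤ maxCycleDegSum n p := by
    have := le_maxCycleDegSum (p := p) (cycleGraph_adj_add_one (by omega) i)
    rw [sdeg_pufferGraph_inl hn, sdeg_pufferGraph_inl hn] at this
    omega
  have hcol := pufferColouring_isStrongEdgeColoring (p := p) (m := maxCycleDegSum n p - 4) h2 h3
    fun i => by have := hsum i; omega
  have := hsum 0
  exact (sci_le hcol).trans (by omega)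

end PufferSci

theorem sci_even_cycle_mod0_general (k : ℕ) (hk : 3 ≤ k) (hmod : (2 * k) % 3 = 0)
    (p : Fin (2 * k) → ℕ) :
    sci (pufferGraph (2 * k) p) = maxCycleDegSum (2 * k) p - 1 := by
  have : NeZero (2 * k) := ⟨by omega⟩
  exact le_antisymm (sci_pufferGraph_le (Nat.dvd_mul_right 2 k) (Nat.dvd_of_mod_eq_zero hmod))
    maxCycleDegSum_sub_one_le_sci

/-- Let `G ≠ C_{2k}` be obtained from an even cycle `C_{2k}`, `2k ≥ 6`, `2k ≡ 0 (mod 3)`, by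
attaching pendant edges at cycle vertices (at least one pendant edge in total). Then the strong
chromatic index equals the maximum of `d(u) + d(v) - 1` over the edges `uv` of the cycle. -/
theorem sci_even_cycle_mod0 (k : ℕ) (hk : 3 ≤ k) (hmod : (2 * k) % 3 = 0)
    (p : Fin (2 * k) → ℕ) (hp : ∃ i, 1 ≤ p i) :
    sci (pufferGraph (2 * k) p) = maxCycleDegSum (2 * k) p - 1 :=
  sci_even_cycle_mod0_general k hk hmod p
end
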